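/- arXiv:2301.09281 — 8 statements merged into one kernel-verified Lean document; each statement's English description precedes it below -/
import Mathlib

section
/- Let a, b, c be nonnegative real numbers with a + b + c = 1, and let m, m', m~, m^ : ℕ → ℝ satisfy the Hosoya recurrence system. Set p = 8 + 3a + 5b + 4c, q = 26a − 10b + 8c, σ = √(p² + 4q), and λ = (p + σ)/2. Then the sequence n ↦ m(n)/λⁿ converges, and its limit is (36 − p + σ)/(2σ). (This is the asymptotic behavior of the expected Hosoya index of the random hexagonal cactus R_n(a,b,c): m(n) grows like ((36 − p + σ)/(2σ))·λⁿ.) -/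
/-!
Eliminating the three auxiliary sequences through their weighted sum
`s n = a * m' n + b * mt n + c * mh n` turns the system into the single recurrence
`m (n + 2) = p * m (n + 1) + q * m n`. Its characteristic roots are `λ = (p + σ) / 2` and
`μ = (p - σ) / 2`, with `|μ| < λ` because `p > 0` and `σ > 0`; hence
`m n = A * λ ^ n + B * μ ^ n` and `m n / λ ^ n → A = (m 1 - μ * m 0) / (λ - μ)`.
-/

open Filter Topology

theorem eq_geom_combination_of_two_step_recurrence {K : Type*} [Field K] {u : ℕ → K} {l μ : K}
    (hlμ : l ≠ μ) (hu : ∀ n, u (n + 2) = (l + μ) * u (n + 1) - l * μ * u n) (n : ℕ) :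
    u n = (u 1 - μ * u 0) / (l - μ) * l ^ n + (l * u 0 - u 1) / (l - μ) * μ ^ n := by
  have hlμ' : l - μ ≠ 0 := sub_ne_zero.mpr hlμ
  induction n using Nat.twoStepInduction with
  | zero => field_simp; ring
  | one => field_simp; ring
  | more n ih₀ ih₁ =>
    rw [hu n, ih₁, ih₀]
    ring

theorem tendsto_div_pow_of_two_step_recurrence {u : ℕ → ℝ} {l μ : ℝ} (hμl : |μ| < l)
    (hu : ∀ n, u (n + 2) = (l + μ) * u (n + 1) - l * μ * u n) :
    Tendsto (fun n => u n / l ^ n) atTop (𝓝 ((u 1 - μ * u 0) / (l - μ))) := by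
  have hl : 0 < l := (abs_nonneg μ).trans_lt hμl
  have hlμ : l ≠ μ := ((le_abs_self μ).trans_lt hμl).ne'
  have hratio : Tendsto (fun n => (μ / l) ^ n) atTop (𝓝 0) :=
    tendsto_pow_atTop_nhds_zero_of_abs_lt_one (by rwa [abs_div, abs_of_pos hl, div_lt_one hl])
  have hlim := (hratio.const_mul ((l * u 0 - u 1) / (l - μ))).const_add ((u 1 - μ * u 0) / (l - μ))
  rw [mul_zero, add_zero] at hlim
  refine hlim.congr fun n => ?_
  rw [eq_geom_combination_of_two_step_recurrence hlμ hu n, div_pow]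
  field_simp

theorem hosoya_recurrence (a b c : ℝ) (habc : a + b + c = 1) (m m' mt mh : ℕ → ℝ)
    (hm0 : m 0 = 1) (hm1 : m 1 = 18) (hm'0 : m' 0 = 8) (hmt0 : mt 0 = 8) (hmh0 : mh 0 = 8)
    (hm : ∀ n, 2 ≤ n →
      m n = 8 * m (n - 1) + 10 * a * m' (n - 2) + 10 * b * mt (n - 2) + 10 * c * mh (n - 2))
    (hm' : ∀ n, 1 ≤ n →
      m' n = 5 * m n + 3 * a * m' (n - 1) + 3 * b * mt (n - 1) + 3 * c * mh (n - 1))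
    (hmt : ∀ n, 1 ≤ n →
      mt n = 3 * m n + 5 * a * m' (n - 1) + 5 * b * mt (n - 1) + 5 * c * mh (n - 1))
    (hmh : ∀ n, 1 ≤ n →
      mh n = 4 * m n + 4 * a * m' (n - 1) + 4 * b * mt (n - 1) + 4 * c * mh (n - 1)) (n : ℕ) :
    m (n + 2) = (8 + 3 * a + 5 * b + 4 * c) * m (n + 1) + (26 * a - 10 * b + 8 * c) * m n := by
  set s : ℕ → ℝ := fun n => a * m' n + b * mt n + c * mh n with hs
  have hs_succ (n : ℕ) :
      s (n + 1) = (5 * a + 3 * b + 4 * c) * m (n + 1) + (3 * a + 5 * b + 4 * c) * s n := by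
    simp only [hs, hm' (n + 1) le_add_self, hmt (n + 1) le_add_self, hmh (n + 1) le_add_self,
      Nat.add_sub_cancel]
    ring
  have hm_succ_succ (n : ℕ) : m (n + 2) = 8 * m (n + 1) + 10 * s n := by
    simp only [hs, hm (n + 2) le_add_self, Nat.add_sub_cancel, Nat.add_succ_sub_one]
    ring
  cases n with
  | zero =>
    have hs0 : s 0 = 8 := by simp only [hs, hm'0, hmt0, hmh0]; linear_combination 8 * habc
    rw [hm_succ_succ, hs0, hm0, hm1]
    linear_combination -80 * habc
  | succ k =>
    linear_combination hm_succ_succ (k + 1) + 10 * hs_succ k -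
      (3 * a + 5 * b + 4 * c) * hm_succ_succ k

/-- With `a = 1 - b - c` and `t = 2 * b + c`, the discriminant is `(25 - t) ^ 2 - 400`,
and `t ≤ 2`. -/
theorem hosoya_discriminant_pos (a b c : ℝ) (ha : 0 ≤ a) (hb : 0 ≤ b) (hc : 0 ≤ c)
    (habc : a + b + c = 1) :
    0 < (8 + 3 * a + 5 * b + 4 * c) ^ 2 + 4 * (26 * a - 10 * b + 8 * c) := by
  obtain rfl : a = 1 - b - c := by linarith
  nlinarith

/-- Theorem 4 (asymptotics of the expected Hosoya index of random hexagonal cacti):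
m(n)/λⁿ converges to (36 - p + σ)/(2σ). -/
theorem hosoya_asymptotics (a b c : ℝ) (ha : 0 ≤ a) (hb : 0 ≤ b) (hc : 0 ≤ c)
    (habc : a + b + c = 1)
(m m' mt mh : ℕ → ℝ)
    (hm0 : m 0 = 1) (hm1 : m 1 = 18)
    (hm'0 : m' 0 = 8) (hmt0 : mt 0 = 8) (hmh0 : mh 0 = 8)
    (hm : ∀ n, 2 ≤ n →
      m n = 8 * m (n - 1) + 10 * a * m' (n - 2) + 10 * b * mt (n - 2) + 10 * c * mh (n - 2))
    (hm' : ∀ n, 1 ≤ n →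
      m' n = 5 * m n + 3 * a * m' (n - 1) + 3 * b * mt (n - 1) + 3 * c * mh (n - 1))
    (hmt : ∀ n, 1 ≤ n →
      mt n = 3 * m n + 5 * a * m' (n - 1) + 5 * b * mt (n - 1) + 5 * c * mh (n - 1))
    (hmh : ∀ n, 1 ≤ n →
      mh n = 4 * m n + 4 * a * m' (n - 1) + 4 * b * mt (n - 1) + 4 * c * mh (n - 1))
    (p q σ lam : ℝ)
    (hp : p = 8 + 3 * a + 5 * b + 4 * c)
    (hq : q = 26 * a - 10 * b + 8 * c)
    (hσ : σ = Real.sqrt (p ^ 2 + 4 * q))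
    (hlam : lam = (p + σ) / 2) :
    Filter.Tendsto (fun n : ℕ => m n / lam ^ n) Filter.atTop
      (nhds ((36 - p + σ) / (2 * σ))) := by
  have hdisc : 0 < p ^ 2 + 4 * q := hp ▸ hq ▸ hosoya_discriminant_pos a b c ha hb hc habc
  have hσ_pos : 0 < σ := hσ ▸ Real.sqrt_pos.mpr hdisc
  have hσ_sq : σ ^ 2 = p ^ 2 + 4 * q := hσ ▸ Real.sq_sqrt hdisc.le
  have hp_pos : 0 < p := by rw [hp]; linarith
  set μ := (p - σ) / 2 with hμ
  have hμ_lt : |μ| < lam := abs_lt.mpr ⟨by linarith, by linarith⟩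
  have hrec (n : ℕ) : m (n + 2) = (lam + μ) * m (n + 1) - lam * μ * m n := by
    rw [hosoya_recurrence a b c habc m m' mt mh hm0 hm1 hm'0 hmt0 hmh0 hm hm' hmt hmh n, ← hp, ← hq,
      hlam]
    linear_combination (-m n / 4) * hσ_sq
  convert tendsto_div_pow_of_two_step_recurrence hμ_lt hrec using 2
  rw [hm0, hm1, hlam, hμ]
  field_simp [hσ_pos.ne']
  ring
end

section
/- Let a, b, c be nonnegative real numbers with a + b + c = 1, and let i, i', i~, i^ : ℕ → ℝ satisfy the Merrifield–Simmons recurrence system. Set P = 5 + 3a + 7b + 5c, Q = 25a − 11b + 7c, σ = √(P² + 4Q), and λ = (P + σ)/2. Then the sequence n ↦ i(n)/λⁿ converges, and its limit is (18λ + 2Q)/(λσ). (This is the asymptotic behavior of the expected Merrifield–Simmons index of the random hexagonal cactus R_n(a,b,c): i(n) grows like ((18λ + 2Q)/(λσ))·λⁿ.) -/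
/-!
Eliminating the auxiliary sequences leaves the scalar recurrence
`i (n + 3) = P i (n + 2) + Q i (n + 1)`, whose characteristic roots are `λ` and `μ = (P - σ) / 2`.
Since `P > 0` and `σ > 0`, `|μ| < λ`, so by Binet's formula `i (n + 1) / λ ^ n` tends to the
coefficient of `λ ^ n`, namely `(i 2 - 18 μ) / σ = (18 λ + 2 Q) / σ`.
-/

open Filter Topology

theorem sub_mul_eq_binet_of_two_term_recurrence {R : Type*} [CommRing R] {x : ℕ → R} {l m : R}
    (hx : ∀ n, x (n + 2) = (l + m) * x (n + 1) - l * m * x n) (n : ℕ) :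
    (l - m) * x n = (x 1 - m * x 0) * l ^ n - (x 1 - l * x 0) * m ^ n := by
  induction n using Nat.twoStepInduction with
  | zero => ring
  | one => ring
  | more n h₀ h₁ => rw [hx, mul_sub, mul_left_comm, h₁, mul_left_comm, h₀]; ring

theorem tendsto_div_pow_of_two_term_recurrence {x : ℕ → ℝ} {l m : ℝ}
    (hx : ∀ n, x (n + 2) = (l + m) * x (n + 1) - l * m * x n) (hml : |m| < l) :
    Tendsto (fun n ↦ x n / l ^ n) atTop (𝓝 ((x 1 - m * x 0) / (l - m))) := by
  have hl : 0 < l := (abs_nonneg m).trans_lt hml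
  have hlm : l - m ≠ 0 := sub_ne_zero.mpr (lt_of_abs_lt hml).ne'
  have hratio : Tendsto (fun n ↦ (m / l) ^ n) atTop (𝓝 0) := by
    refine tendsto_pow_atTop_nhds_zero_of_abs_lt_one ?_
    rwa [abs_div, abs_of_pos hl, div_lt_one hl]
  have hlim := (hratio.const_mul ((x 1 - l * x 0) / (l - m))).const_sub ((x 1 - m * x 0) / (l - m))
  rw [mul_zero, sub_zero] at hlim
  refine hlim.congr fun n ↦ ?_
  rw [eq_div_iff (pow_ne_zero n hl.ne'), div_pow, ← mul_right_inj' hlm,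
    sub_mul_eq_binet_of_two_term_recurrence hx n]
  field_simp

theorem merrifield_simmons_index_recurrence (a b c : ℝ) (i i' it ih : ℕ → ℝ)
    (hi : ∀ n, 2 ≤ n →
      i n = 5 * i (n - 1) + 8 * a * i' (n - 2) + 8 * b * it (n - 2) + 8 * c * ih (n - 2))
    (hi' : ∀ n, 1 ≤ n →
      i' n = 5 * i n + 3 * a * i' (n - 1) + 3 * b * it (n - 1) + 3 * c * ih (n - 1))
    (hit : ∀ n, 1 ≤ n →
      it n = 3 * i n + 7 * a * i' (n - 1) + 7 * b * it (n - 1) + 7 * c * ih (n - 1))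
    (hih : ∀ n, 1 ≤ n →
      ih n = 4 * i n + 5 * a * i' (n - 1) + 5 * b * it (n - 1) + 5 * c * ih (n - 1))
    (n : ℕ) :
    i (n + 3) = (5 + 3 * a + 7 * b + 5 * c) * i (n + 2) + (25 * a - 11 * b + 7 * c) * i (n + 1) := by
  have h₃ := hi (n + 3) (by omega)
  have h₂ := hi (n + 2) (by omega)
  have h₁' := hi' (n + 1) (by omega)
  have h₁t := hit (n + 1) (by omega)
  have h₁h := hih (n + 1) (by omega)
  simp only [Nat.reduceSubDiff, add_tsub_cancel_right] at h₃ h₂ h₁' h₁t h₁h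
  -- `a i' n + b it n + c ih n` occurs both in `h₁'`, `h₁t`, `h₁h` and in `h₂`, hence cancels
  linear_combination h₃ + 8 * a * h₁' + 8 * b * h₁t + 8 * c * h₁h - (3 * a + 7 * b + 5 * c) * h₂

theorem merrifield_simmons_index_two (a b c : ℝ) (i i' it ih : ℕ → ℝ) (hi1 : i 1 = 18)
    (hi'0 : i' 0 = 13) (hit0 : it 0 = 13) (hih0 : ih 0 = 13)
    (hi : ∀ n, 2 ≤ n →
      i n = 5 * i (n - 1) + 8 * a * i' (n - 2) + 8 * b * it (n - 2) + 8 * c * ih (n - 2)) :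
    i 2 = 18 * (5 + 3 * a + 7 * b + 5 * c) + 2 * (25 * a - 11 * b + 7 * c) := by
  have h := hi 2 le_rfl
  norm_num [hi1, hi'0, hit0, hih0] at h
  linear_combination h

theorem merrifield_simmons_asymptotics_general (a b c : ℝ) (ha : 0 ≤ a) (hb : 0 ≤ b) (hc : 0 ≤ c)
(i i' it ih : ℕ → ℝ)
    (hi1 : i 1 = 18)
    (hi'0 : i' 0 = 13) (hit0 : it 0 = 13) (hih0 : ih 0 = 13)
    (hi : ∀ n, 2 ≤ n →
      i n = 5 * i (n - 1) + 8 * a * i' (n - 2) + 8 * b * it (n - 2) + 8 * c * ih (n - 2))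
    (hi' : ∀ n, 1 ≤ n →
      i' n = 5 * i n + 3 * a * i' (n - 1) + 3 * b * it (n - 1) + 3 * c * ih (n - 1))
    (hit : ∀ n, 1 ≤ n →
      it n = 3 * i n + 7 * a * i' (n - 1) + 7 * b * it (n - 1) + 7 * c * ih (n - 1))
    (hih : ∀ n, 1 ≤ n →
      ih n = 4 * i n + 5 * a * i' (n - 1) + 5 * b * it (n - 1) + 5 * c * ih (n - 1))
    (P Q σ lam : ℝ)
    (hP : P = 5 + 3 * a + 7 * b + 5 * c)
    (hQ : Q = 25 * a - 11 * b + 7 * c)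
    (hσ : σ = Real.sqrt (P ^ 2 + 4 * Q))
    (hlam : lam = (P + σ) / 2) :
    Filter.Tendsto (fun n : ℕ => i n / lam ^ n) Filter.atTop
      (nhds ((18 * lam + 2 * Q) / (lam * σ))) := by
  set μ := (P - σ) / 2
  have hP₀ : 0 < P := by rw [hP]; positivity
  have hdisc : 0 < P ^ 2 + 4 * Q := by rw [hP, hQ]; nlinarith [mul_nonneg ha hb]
  have hσ₀ : 0 < σ := hσ ▸ Real.sqrt_pos.mpr hdisc
  have hσsq : σ ^ 2 = P ^ 2 + 4 * Q := hσ ▸ Real.sq_sqrt hdisc.le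
  have hsum : lam + μ = P := by rw [hlam]; ring
  have hprod : lam * μ = -Q := by rw [hlam]; linear_combination (-1 / 4 : ℝ) * hσsq
  have hdom : |μ| < lam := abs_lt.mpr ⟨by linarith, by linarith⟩
  have hrec (n : ℕ) : i (n + 1 + 2) = (lam + μ) * i (n + 1 + 1) - lam * μ * i (n + 1) := by
    rw [hsum, hprod, hP, hQ]
    linear_combination merrifield_simmons_index_recurrence a b c i i' it ih hi hi' hit hih n
  have hlim := (tendsto_div_pow_of_two_term_recurrence (x := fun n ↦ i (n + 1)) hrec hdom).div_const lam
  rw [← tendsto_add_atTop_iff_nat 1]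
  convert hlim using 2 with n
  · rw [pow_succ, div_div]
  · rw [merrifield_simmons_index_two a b c i i' it ih hi1 hi'0 hit0 hih0 hi, hi1, ← hP, ← hQ]
    rw [show lam - μ = σ by rw [hlam]; ring, div_div, mul_comm σ]
    congr 1
    linarith

/-- Theorem 6 (asymptotics of the expected Merrifield–Simmons index of random hexagonal
cacti): i(n)/λⁿ converges to (18λ + 2Q)/(λσ). -/
theorem merrifield_simmons_asymptotics (a b c : ℝ) (ha : 0 ≤ a) (hb : 0 ≤ b) (hc : 0 ≤ c)
    (habc : a + b + c = 1)
(i i' it ih : ℕ → ℝ)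
    (hi0 : i 0 = 1) (hi1 : i 1 = 18)
    (hi'0 : i' 0 = 13) (hit0 : it 0 = 13) (hih0 : ih 0 = 13)
    (hi : ∀ n, 2 ≤ n →
      i n = 5 * i (n - 1) + 8 * a * i' (n - 2) + 8 * b * it (n - 2) + 8 * c * ih (n - 2))
    (hi' : ∀ n, 1 ≤ n →
      i' n = 5 * i n + 3 * a * i' (n - 1) + 3 * b * it (n - 1) + 3 * c * ih (n - 1))
    (hit : ∀ n, 1 ≤ n →
      it n = 3 * i n + 7 * a * i' (n - 1) + 7 * b * it (n - 1) + 7 * c * ih (n - 1))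
    (hih : ∀ n, 1 ≤ n →
      ih n = 4 * i n + 5 * a * i' (n - 1) + 5 * b * it (n - 1) + 5 * c * ih (n - 1))
    (P Q σ lam : ℝ)
    (hP : P = 5 + 3 * a + 7 * b + 5 * c)
    (hQ : Q = 25 * a - 11 * b + 7 * c)
    (hσ : σ = Real.sqrt (P ^ 2 + 4 * Q))
    (hlam : lam = (P + σ) / 2) :
    Filter.Tendsto (fun n : ℕ => i n / lam ^ n) Filter.atTop
      (nhds ((18 * lam + 2 * Q) / (lam * σ))) :=
  merrifield_simmons_asymptotics_general a b c ha hb hc i i' it ih hi1 hi'0 hit0 hih0 hi hi' hit hih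
    P Q σ lam hP hQ hσ hlam
end

section
/- Let m, m', m~, m^ : ℕ → ℝ satisfy the Hosoya recurrence system with parameters a = 0, b = 1, c = 0 (the meta-hexagonal cactus case). Then in ℝ[[X]] one has (1 − 13·X + 10·X²) · (∑_{n≥0} m(n)·Xⁿ) = 1 + 5·X; that is, the generating function of the number of matchings of meta-hexagonal cacti is M(x) = (1 + 5x)/(1 − 13x + 10x²). -/
/-!
Since the coefficients of `m'` and `mh` vanish, only `m` and `mt` interact. Eliminating `mt` from
`m (n+2) = 8 m (n+1) + 10 mt n` and `mt (n+1) = 3 m (n+1) + 5 mt n` gives the linear recurrence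
`m (n+2) = 13 m (n+1) - 10 m n`, whose characteristic polynomial `1 - 13X + 10X²` kills the
generating function up to the initial terms `1 + (18 - 13) X`.
-/

open PowerSeries

theorem one_sub_C_mul_X_add_C_mul_X_sq_mul_mk {R : Type*} [CommRing R] {p q : R} {u : ℕ → R}
    (hu : ∀ n, u (n + 2) = p * u (n + 1) - q * u n) :
    (1 - C p * X + C q * X ^ 2) * mk u = C (u 0) + C (u 1 - p * u 0) * X := by
  ext n
  rcases n with _ | _ | n
  · simp
  · simp [sub_mul, add_mul, mul_assoc, coeff_X_pow_mul']
  · simp [sub_mul, add_mul, mul_assoc, coeff_X_pow_mul', hu]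

theorem second_order_recurrence_of_coupled {R : Type*} [CommRing R] {α β γ δ : R} {u v : ℕ → R}
    (hu : ∀ n, u (n + 2) = α * u (n + 1) + β * v n)
    (hv : ∀ n, v (n + 1) = γ * u (n + 1) + δ * v n) (n : ℕ) :
    u (n + 3) = (α + δ) * u (n + 2) - (α * δ - β * γ) * u (n + 1) := by
  rw [hu (n + 1), hv n]
  linear_combination (-δ) * hu n

theorem hosoya_genfun_meta_general
    (m m' mt mh : ℕ → ℝ)
    (hm0 : m 0 = 1) (hm1 : m 1 = 18)
    (hmt0 : mt 0 = 8)
    (hm : ∀ n, 2 ≤ n →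
      m n = 8 * m (n - 1) + 10 * (0 : ℝ) * m' (n - 2) + 10 * (1 : ℝ) * mt (n - 2)
        + 10 * (0 : ℝ) * mh (n - 2))
    (hmt : ∀ n, 1 ≤ n →
      mt n = 3 * m n + 5 * (0 : ℝ) * m' (n - 1) + 5 * (1 : ℝ) * mt (n - 1)
        + 5 * (0 : ℝ) * mh (n - 1)) :
    (1 - (13 : PowerSeries ℝ) * PowerSeries.X + (10 : PowerSeries ℝ) * PowerSeries.X ^ 2) * PowerSeries.mk m
      = 1 + (5 : PowerSeries ℝ) * PowerSeries.X := by
  have hm_step (n : ℕ) : m (n + 2) = 8 * m (n + 1) + 10 * mt n := by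
    simpa using hm (n + 2) (by omega)
  have hmt_step (n : ℕ) : mt (n + 1) = 3 * m (n + 1) + 5 * mt n := by
    simpa using hmt (n + 1) (by omega)
  have hrec : ∀ n, m (n + 2) = 13 * m (n + 1) - 10 * m n
    | 0 => by rw [hm_step, hm1, hm0, hmt0]; norm_num
    | n + 1 => by
      rw [second_order_recurrence_of_coupled hm_step hmt_step n]
      norm_num
  have h := one_sub_C_mul_X_add_C_mul_X_sq_mul_mk hrec
  rw [map_ofNat, map_ofNat, hm0, hm1] at h
  rw [h, show (18 : ℝ) - 13 * 1 = 5 by norm_num, map_one, map_ofNat]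

/-- Generating function of the number of matchings of meta-hexagonal cacti. -/
theorem hosoya_genfun_meta
    (m m' mt mh : ℕ → ℝ)
    (hm0 : m 0 = 1) (hm1 : m 1 = 18)
    (hm'0 : m' 0 = 8) (hmt0 : mt 0 = 8) (hmh0 : mh 0 = 8)
    (hm : ∀ n, 2 ≤ n →
      m n = 8 * m (n - 1) + 10 * (0 : ℝ) * m' (n - 2) + 10 * (1 : ℝ) * mt (n - 2)
        + 10 * (0 : ℝ) * mh (n - 2))
    (hm' : ∀ n, 1 ≤ n →
      m' n = 5 * m n + 3 * (0 : ℝ) * m' (n - 1) + 3 * (1 : ℝ) * mt (n - 1)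
        + 3 * (0 : ℝ) * mh (n - 1))
    (hmt : ∀ n, 1 ≤ n →
      mt n = 3 * m n + 5 * (0 : ℝ) * m' (n - 1) + 5 * (1 : ℝ) * mt (n - 1)
        + 5 * (0 : ℝ) * mh (n - 1))
    (hmh : ∀ n, 1 ≤ n →
      mh n = 4 * m n + 4 * (0 : ℝ) * m' (n - 1) + 4 * (1 : ℝ) * mt (n - 1)
        + 4 * (0 : ℝ) * mh (n - 1)) :
    (1 - (13 : PowerSeries ℝ) * PowerSeries.X + (10 : PowerSeries ℝ) * PowerSeries.X ^ 2) * PowerSeries.mk m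
      = 1 + (5 : PowerSeries ℝ) * PowerSeries.X :=
  hosoya_genfun_meta_general m m' mt mh hm0 hm1 hmt0 hm hmt
end

section
/- Let m, m', m~, m^ : ℕ → ℝ satisfy the Hosoya recurrence system with parameters a = 0, b = 0, c = 1 (the para-hexagonal cactus case). Then in ℝ[[X]] one has (1 − 12·X − 8·X²) · (∑_{n≥0} m(n)·Xⁿ) = 1 + 6·X; that is, the generating function of the number of matchings of para-hexagonal cacti is P(x) = (1 + 6x)/(1 − 12x − 8x²). -/
/-!
Eliminating the auxiliary sequence `mh` from the two recurrences that involve it shows that `m`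
satisfies `m (n + 2) = 12 * m (n + 1) + 8 * m n`. A sequence obeying a two-term linear recurrence
has a generating function whose product with the characteristic series `1 - p X - q X²` is the
polynomial `u 0 + (u 1 - p u 0) X`, since every coefficient of degree at least two cancels.
-/

namespace PowerSeries

variable {R : Type*} [CommRing R]

theorem coeff_one_sub_C_mul_X_sub_C_mul_X_sq_mul (p q : R) (f : PowerSeries R) (n : ℕ) :
    coeff (n + 2) ((1 - C p * X - C q * X ^ 2) * f)
      = coeff (n + 2) f - p * coeff (n + 1) f - q * coeff n f := by
  simp only [sub_mul, one_mul, mul_assoc, map_sub, coeff_C_mul, coeff_succ_X_mul,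
    coeff_X_pow_mul]

theorem one_sub_C_mul_X_sub_C_mul_X_sq_mul_mk {p q : R} {u : ℕ → R}
    (hu : ∀ n, u (n + 2) = p * u (n + 1) + q * u n) :
    (1 - C p * X - C q * X ^ 2) * mk u = C (u 0) + C (u 1 - p * u 0) * X := by
  ext n
  rcases n with _ | _ | n
  · simp
  · simp [sub_mul, mul_assoc, coeff_X_pow_mul']
  · rw [coeff_one_sub_C_mul_X_sub_C_mul_X_sq_mul]
    simp [hu n]

end PowerSeries

theorem para_matchings_recurrence (m mh : ℕ → ℝ)
    (hm0 : m 0 = 1) (hm1 : m 1 = 18) (hmh0 : mh 0 = 8)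
    (hm : ∀ n, m (n + 2) = 8 * m (n + 1) + 10 * mh n)
    (hmh : ∀ n, mh (n + 1) = 4 * m (n + 1) + 4 * mh n) (n : ℕ) :
    m (n + 2) = 12 * m (n + 1) + 8 * m n := by
  cases n with
  | zero => linarith [hm 0]
  | succ n =>
    -- `10 * mh n = m (n + 2) - 8 * m (n + 1)` removes the last occurrence of `mh`.
    linarith [hm (n + 1), hm n, hmh n]

theorem hosoya_genfun_para_general
    (m m' mt mh : ℕ → ℝ)
    (hm0 : m 0 = 1) (hm1 : m 1 = 18)
    (hmh0 : mh 0 = 8)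
    (hm : ∀ n, 2 ≤ n →
      m n = 8 * m (n - 1) + 10 * (0 : ℝ) * m' (n - 2) + 10 * (0 : ℝ) * mt (n - 2)
        + 10 * (1 : ℝ) * mh (n - 2))
    (hmh : ∀ n, 1 ≤ n →
      mh n = 4 * m n + 4 * (0 : ℝ) * m' (n - 1) + 4 * (0 : ℝ) * mt (n - 1)
        + 4 * (1 : ℝ) * mh (n - 1)) :
    (1 - (12 : PowerSeries ℝ) * PowerSeries.X - (8 : PowerSeries ℝ) * PowerSeries.X ^ 2) * PowerSeries.mk m
      = 1 + (6 : PowerSeries ℝ) * PowerSeries.X := by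
  have hrec : ∀ n, m (n + 2) = 12 * m (n + 1) + 8 * m n := by
    refine para_matchings_recurrence m mh hm0 hm1 hmh0 (fun n => ?_) (fun n => ?_)
    · simpa using hm (n + 2) (by omega)
    · simpa using hmh (n + 1) (by omega)
  have hgen := PowerSeries.one_sub_C_mul_X_sub_C_mul_X_sq_mul_mk hrec
  rw [hm0, hm1] at hgen
  norm_num at hgen
  exact hgen

/-- Generating function of the number of matchings of para-hexagonal cacti. -/
theorem hosoya_genfun_para
    (m m' mt mh : ℕ → ℝ)
    (hm0 : m 0 = 1) (hm1 : m 1 = 18)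
    (hm'0 : m' 0 = 8) (hmt0 : mt 0 = 8) (hmh0 : mh 0 = 8)
    (hm : ∀ n, 2 ≤ n →
      m n = 8 * m (n - 1) + 10 * (0 : ℝ) * m' (n - 2) + 10 * (0 : ℝ) * mt (n - 2)
        + 10 * (1 : ℝ) * mh (n - 2))
    (hm' : ∀ n, 1 ≤ n →
      m' n = 5 * m n + 3 * (0 : ℝ) * m' (n - 1) + 3 * (0 : ℝ) * mt (n - 1)
        + 3 * (1 : ℝ) * mh (n - 1))
    (hmt : ∀ n, 1 ≤ n →
      mt n = 3 * m n + 5 * (0 : ℝ) * m' (n - 1) + 5 * (0 : ℝ) * mt (n - 1)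
        + 5 * (1 : ℝ) * mh (n - 1))
    (hmh : ∀ n, 1 ≤ n →
      mh n = 4 * m n + 4 * (0 : ℝ) * m' (n - 1) + 4 * (0 : ℝ) * mt (n - 1)
        + 4 * (1 : ℝ) * mh (n - 1)) :
    (1 - (12 : PowerSeries ℝ) * PowerSeries.X - (8 : PowerSeries ℝ) * PowerSeries.X ^ 2) * PowerSeries.mk m
      = 1 + (6 : PowerSeries ℝ) * PowerSeries.X :=
  hosoya_genfun_para_general m m' mt mh hm0 hm1 hmh0 hm hmh
end

section
/- Let i, i', i~, i^ : ℕ → ℝ satisfy the Merrifield–Simmons recurrence system with parameters a = 1, b = 0, c = 0 (the ortho-hexagonal cactus case). Then in ℝ[[X]] one has (1 − 8·X − 25·X²) · (∑_{n≥0} i(n)·Xⁿ) = 1 + 10·X + 25·X²; that is, the generating function of the number of independent sets of ortho-hexagonal cacti is (1 + 10x + 25x²)/(1 − 8x − 25x²). -/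
/-!
Eliminating `i'` from the coupled recurrences gives `i (n + 3) = 8 i (n + 2) + 25 i (n + 1)`, so
multiplying the generating function by `1 - 8X - 25X²` kills every coefficient beyond `X²`; the
remaining three are read off from `i 0 = 1`, `i 1 = 18` and `i 2 = 194`.
-/

open PowerSeries

section LinearRecurrence

variable {R : Type*} [CommRing R]

theorem coeff_succ_succ_one_sub_mul (p q : R) (f : R⟦X⟧) (n : ℕ) :
    coeff (n + 2) ((1 - C p * X - C q * X ^ 2) * f)
      = coeff (n + 2) f - p * coeff (n + 1) f - q * coeff n f := by
  simp only [sub_mul, one_mul, mul_assoc, pow_two, map_sub, coeff_C_mul, coeff_succ_X_mul]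

theorem one_sub_mul_mk_of_recurrence (p q : R) (u : ℕ → R)
    (hu : ∀ n, u (n + 3) = p * u (n + 2) + q * u (n + 1)) :
    (1 - C p * X - C q * X ^ 2) * mk u
      = C (u 0) + C (u 1 - p * u 0) * X + C (u 2 - p * u 1 - q * u 0) * X ^ 2 := by
  ext n
  rcases n with _ | _ | _ | n
  · simp
  · simp [sub_mul, mul_assoc, pow_two, coeff_X]
  all_goals
    rw [coeff_succ_succ_one_sub_mul]
    simp only [map_add, coeff_C, coeff_C_mul, coeff_X, coeff_X_pow, coeff_mk]
    simp [hu]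

theorem second_order_recurrence_of_coupled_s7 (a : R) (i j : ℕ → R)
    (hi : ∀ n, i (n + 2) = 5 * i (n + 1) + 8 * a * j n)
    (hj : ∀ n, j (n + 1) = 5 * i (n + 1) + 3 * a * j n) (n : ℕ) :
    i (n + 3) = (5 + 3 * a) * i (n + 2) + 25 * a * i (n + 1) := by
  have h₁ := hi (n + 1)
  have h₂ := hi n
  have h₃ := hj n
  linear_combination h₁ + 8 * a * h₃ - 3 * a * h₂

end LinearRecurrence

theorem merrifield_simmons_genfun_ortho_general
    (i i' it ih : ℕ → ℝ)
    (hi0 : i 0 = 1) (hi1 : i 1 = 18)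
    (hi'0 : i' 0 = 13)
    (hi : ∀ n, 2 ≤ n →
      i n = 5 * i (n - 1) + 8 * (1 : ℝ) * i' (n - 2) + 8 * (0 : ℝ) * it (n - 2)
        + 8 * (0 : ℝ) * ih (n - 2))
    (hi' : ∀ n, 1 ≤ n →
      i' n = 5 * i n + 3 * (1 : ℝ) * i' (n - 1) + 3 * (0 : ℝ) * it (n - 1)
        + 3 * (0 : ℝ) * ih (n - 1)) :
    (1 - (8 : PowerSeries ℝ) * PowerSeries.X - (25 : PowerSeries ℝ) * PowerSeries.X ^ 2) * PowerSeries.mk i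
      = 1 + (10 : PowerSeries ℝ) * PowerSeries.X + (25 : PowerSeries ℝ) * PowerSeries.X ^ 2 := by
  have hi_shift : ∀ n, i (n + 2) = 5 * i (n + 1) + 8 * 1 * i' n := fun n => by
    simpa using hi (n + 2) (by omega)
  have hi'_shift : ∀ n, i' (n + 1) = 5 * i (n + 1) + 3 * 1 * i' n := fun n => by
    simpa using hi' (n + 1) (by omega)
  have hi2 : i 2 = 194 := by norm_num [hi_shift 0, hi1, hi'0]
  have hrec : ∀ n, i (n + 3) = 8 * i (n + 2) + 25 * i (n + 1) := fun n => by
    simpa [show (5 : ℝ) + 3 = 8 by norm_num] using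
      second_order_recurrence_of_coupled_s7 1 i i' hi_shift hi'_shift n
  have hgen := one_sub_mul_mk_of_recurrence 8 25 i hrec
  norm_num [hi0, hi1, hi2, map_ofNat] at hgen
  exact hgen

/-- Generating function of the number of independent sets of ortho-hexagonal cacti. -/
theorem merrifield_simmons_genfun_ortho
    (i i' it ih : ℕ → ℝ)
    (hi0 : i 0 = 1) (hi1 : i 1 = 18)
    (hi'0 : i' 0 = 13) (hit0 : it 0 = 13) (hih0 : ih 0 = 13)
    (hi : ∀ n, 2 ≤ n →
      i n = 5 * i (n - 1) + 8 * (1 : ℝ) * i' (n - 2) + 8 * (0 : ℝ) * it (n - 2)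
        + 8 * (0 : ℝ) * ih (n - 2))
    (hi' : ∀ n, 1 ≤ n →
      i' n = 5 * i n + 3 * (1 : ℝ) * i' (n - 1) + 3 * (0 : ℝ) * it (n - 1)
        + 3 * (0 : ℝ) * ih (n - 1))
    (hit : ∀ n, 1 ≤ n →
      it n = 3 * i n + 7 * (1 : ℝ) * i' (n - 1) + 7 * (0 : ℝ) * it (n - 1)
        + 7 * (0 : ℝ) * ih (n - 1))
    (hih : ∀ n, 1 ≤ n →
      ih n = 4 * i n + 5 * (1 : ℝ) * i' (n - 1) + 5 * (0 : ℝ) * it (n - 1)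
        + 5 * (0 : ℝ) * ih (n - 1)) :
    (1 - (8 : PowerSeries ℝ) * PowerSeries.X - (25 : PowerSeries ℝ) * PowerSeries.X ^ 2) * PowerSeries.mk i
      = 1 + (10 : PowerSeries ℝ) * PowerSeries.X + (25 : PowerSeries ℝ) * PowerSeries.X ^ 2 :=
  merrifield_simmons_genfun_ortho_general i i' it ih hi0 hi1 hi'0 hi hi'
end

section
/- Let a, b, c be nonnegative real numbers with a + b + c = 1, and let i, i', i~, i^ : ℕ → ℝ satisfy the Merrifield–Simmons recurrence system. Set P = 5 + 3a + 7b + 5c and Q = 25a − 11b + 7c. Then i(2) = 18·P + 2·Q, and for all n ≥ 3, i(n) = P·i(n−1) + Q·i(n−2). -/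
/-!
Write `s n = a·i'(n) + b·i~(n) + c·i^(n)`. The system collapses to the coupled first-order pair
`i(n+2) = 5·i(n+1) + 8·s(n)` and `s(n+1) = (5a+3b+4c)·i(n+1) + (3a+7b+5c)·s(n)`; eliminating `s`
with the first equation (as `8·s(n) = i(n+2) - 5·i(n+1)`) leaves a second-order recurrence for `i`
whose coefficients are `P` and `Q`.
-/

theorem second_order_of_coupled {R : Type*} [CommRing R] (p r α β : R) (x s : ℕ → R)
    (hx : ∀ n, x (n + 2) = p * x (n + 1) + r * s n)
    (hs : ∀ n, s (n + 1) = α * x (n + 1) + β * s n) (n : ℕ) :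
    x (n + 3) = (p + β) * x (n + 2) + (r * α - p * β) * x (n + 1) := by
  linear_combination hx (n + 1) + r * hs n - β * hx n

theorem merrifield_simmons_second_order_recurrence_general (a b c : ℝ)
(i i' it ih : ℕ → ℝ)
    (hi1 : i 1 = 18)
    (hi'0 : i' 0 = 13) (hit0 : it 0 = 13) (hih0 : ih 0 = 13)
    (hi : ∀ n, 2 ≤ n →
      i n = 5 * i (n - 1) + 8 * a * i' (n - 2) + 8 * b * it (n - 2) + 8 * c * ih (n - 2))
    (hi' : ∀ n, 1 ≤ n →
      i' n = 5 * i n + 3 * a * i' (n - 1) + 3 * b * it (n - 1) + 3 * c * ih (n - 1))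
    (hit : ∀ n, 1 ≤ n →
      it n = 3 * i n + 7 * a * i' (n - 1) + 7 * b * it (n - 1) + 7 * c * ih (n - 1))
    (hih : ∀ n, 1 ≤ n →
      ih n = 4 * i n + 5 * a * i' (n - 1) + 5 * b * it (n - 1) + 5 * c * ih (n - 1))
    (P Q : ℝ)
    (hP : P = 5 + 3 * a + 7 * b + 5 * c)
    (hQ : Q = 25 * a - 11 * b + 7 * c) :
    i 2 = 18 * P + 2 * Q ∧ ∀ n, 3 ≤ n → i n = P * i (n - 1) + Q * i (n - 2) := by
  let s : ℕ → ℝ := fun n ↦ a * i' n + b * it n + c * ih n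
  have hx : ∀ n, i (n + 2) = 5 * i (n + 1) + 8 * s n := fun n ↦ by
    linear_combination (by simpa using hi (n + 2) (by omega) :
      i (n + 2) = 5 * i (n + 1) + 8 * a * i' n + 8 * b * it n + 8 * c * ih n)
  have hs : ∀ n,
      s (n + 1) = (5 * a + 3 * b + 4 * c) * i (n + 1) + (3 * a + 7 * b + 5 * c) * s n :=
    fun n ↦ by
      have h' := hi' (n + 1) (by omega)
      have ht := hit (n + 1) (by omega)
      have hh := hih (n + 1) (by omega)
      simp only [Nat.add_sub_cancel] at h' ht hh
      linear_combination a * h' + b * ht + c * hh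
  refine ⟨?_, fun n hn ↦ ?_⟩
  · linear_combination hx 0 + 5 * hi1 + 8 * a * hi'0 + 8 * b * hit0 + 8 * c * hih0
      - 18 * hP - 2 * hQ
  · obtain ⟨m, rfl⟩ : ∃ m, n = m + 3 := ⟨n - 3, by omega⟩
    rw [show m + 3 - 1 = m + 2 by omega, show m + 3 - 2 = m + 1 by omega,
      second_order_of_coupled _ _ _ _ i s hx hs m, hP, hQ]
    ring

/-- The expected Merrifield–Simmons index of the random hexagonal cactus satisfies a
second-order linear recurrence. -/
theorem merrifield_simmons_second_order_recurrence (a b c : ℝ)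
    (ha : 0 ≤ a) (hb : 0 ≤ b) (hc : 0 ≤ c) (habc : a + b + c = 1)
(i i' it ih : ℕ → ℝ)
    (hi0 : i 0 = 1) (hi1 : i 1 = 18)
    (hi'0 : i' 0 = 13) (hit0 : it 0 = 13) (hih0 : ih 0 = 13)
    (hi : ∀ n, 2 ≤ n →
      i n = 5 * i (n - 1) + 8 * a * i' (n - 2) + 8 * b * it (n - 2) + 8 * c * ih (n - 2))
    (hi' : ∀ n, 1 ≤ n →
      i' n = 5 * i n + 3 * a * i' (n - 1) + 3 * b * it (n - 1) + 3 * c * ih (n - 1))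
    (hit : ∀ n, 1 ≤ n →
      it n = 3 * i n + 7 * a * i' (n - 1) + 7 * b * it (n - 1) + 7 * c * ih (n - 1))
    (hih : ∀ n, 1 ≤ n →
      ih n = 4 * i n + 5 * a * i' (n - 1) + 5 * b * it (n - 1) + 5 * c * ih (n - 1))
    (P Q : ℝ)
    (hP : P = 5 + 3 * a + 7 * b + 5 * c)
    (hQ : Q = 25 * a - 11 * b + 7 * c) :
    i 2 = 18 * P + 2 * Q ∧ ∀ n, 3 ≤ n → i n = P * i (n - 1) + Q * i (n - 2) :=
  merrifield_simmons_second_order_recurrence_general a b c i i' it ih hi1 hi'0 hit0 hih0 hi hi' hit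
    hih P Q hP hQ
end

section
/- Let a, b, c be real numbers, and suppose M, M', M~, M^ are formal power series in ℝ[[X]] satisfying the four functional equations: (1 − 8X)·M = 1 + 10X + 10a·X²·M' + 10b·X²·M~ + 10c·X²·M^; (1 − 3aX)·M' = 3 + 5M + 3b·X·M~ + 3c·X·M^; (1 − 5bX)·M~ = 5 + 3M + 5a·X·M' + 5c·X·M^; and (1 − 4cX)·M^ = 4 + 4M + 4a·X·M' + 4b·X·M~. Then (1 − (8 + 3a + 5b + 4c)·X − (26a − 10b + 8c)·X²)·M = 1 + (10 − 3a − 5b − 4c)·X. -/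
/-!
In the weighted sum `S = a M' + b M~ + c M^` of the three auxiliary series the cross terms of the
last three equations line up: `a`, `b`, `c` times them add up to `(1 - sX) S = s + (5a + 3b + 4c) M`
with `s = 3a + 5b + 4c`. The first equation involves the auxiliary series only through `10 X² S`,
so multiplying it by `1 - sX` eliminates them.
-/

open PowerSeries

section Elimination

variable {R : Type*} [CommRing R] (a b c x M M' Mt Mh : R)

theorem weighted_aux_eq
    (h2 : (1 - 3 * a * x) * M' = 3 + 5 * M + 3 * b * x * Mt + 3 * c * x * Mh)
    (h3 : (1 - 5 * b * x) * Mt = 5 + 3 * M + 5 * a * x * M' + 5 * c * x * Mh)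
    (h4 : (1 - 4 * c * x) * Mh = 4 + 4 * M + 4 * a * x * M' + 4 * b * x * Mt) :
    (1 - (3 * a + 5 * b + 4 * c) * x) * (a * M' + b * Mt + c * Mh)
      = 3 * a + 5 * b + 4 * c + (5 * a + 3 * b + 4 * c) * M := by
  linear_combination a * h2 + b * h3 + c * h4

theorem elimination_of_weighted_aux
    (h1 : (1 - 8 * x) * M = 1 + 10 * x + 10 * x ^ 2 * (a * M' + b * Mt + c * Mh))
    (hS : (1 - (3 * a + 5 * b + 4 * c) * x) * (a * M' + b * Mt + c * Mh)
      = 3 * a + 5 * b + 4 * c + (5 * a + 3 * b + 4 * c) * M) :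
    (1 - (8 + 3 * a + 5 * b + 4 * c) * x - (26 * a - 10 * b + 8 * c) * x ^ 2) * M
      = 1 + (10 - 3 * a - 5 * b - 4 * c) * x := by
  linear_combination (1 - (3 * a + 5 * b + 4 * c) * x) * h1 + 10 * x ^ 2 * hS

end Elimination

/-- Algebraic elimination step solving the system of generating-function equations for the
expected Hosoya index of the random hexagonal cactus. -/
theorem hosoya_elimination (a b c : ℝ) (M M' Mt Mh : ℝ⟦X⟧)
    (h1 : (1 - 8 * X) * M
      = 1 + 10 * X + PowerSeries.C (R := ℝ) (10 * a) * X ^ 2 * M'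
        + PowerSeries.C (R := ℝ) (10 * b) * X ^ 2 * Mt + PowerSeries.C (R := ℝ) (10 * c) * X ^ 2 * Mh)
    (h2 : (1 - PowerSeries.C (R := ℝ) (3 * a) * X) * M'
      = 3 + 5 * M + PowerSeries.C (R := ℝ) (3 * b) * X * Mt + PowerSeries.C (R := ℝ) (3 * c) * X * Mh)
    (h3 : (1 - PowerSeries.C (R := ℝ) (5 * b) * X) * Mt
      = 5 + 3 * M + PowerSeries.C (R := ℝ) (5 * a) * X * M' + PowerSeries.C (R := ℝ) (5 * c) * X * Mh)
    (h4 : (1 - PowerSeries.C (R := ℝ) (4 * c) * X) * Mh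
      = 4 + 4 * M + PowerSeries.C (R := ℝ) (4 * a) * X * M' + PowerSeries.C (R := ℝ) (4 * b) * X * Mt) :
    (1 - PowerSeries.C (R := ℝ) (8 + 3 * a + 5 * b + 4 * c) * X
       - PowerSeries.C (R := ℝ) (26 * a - 10 * b + 8 * c) * X ^ 2) * M
      = 1 + PowerSeries.C (R := ℝ) (10 - 3 * a - 5 * b - 4 * c) * X := by
  simp only [map_mul, map_add, map_sub, map_ofNat] at *
  refine elimination_of_weighted_aux (C a) (C b) (C c) X M M' Mt Mh ?_
    (weighted_aux_eq (C a) (C b) (C c) X M M' Mt Mh h2 h3 h4)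
  linear_combination h1
end

section
/- Let a, b, c be nonnegative real numbers with a + b + c = 1, set P = 5 + 3a + 7b + 5c, Q = 25a − 11b + 7c, σ = √(P² + 4Q), λ = (P + σ)/2 and μ = (P − σ)/2. Let i : ℕ → ℝ satisfy i(1) = 18, i(2) = 18·P + 2·Q, and i(n) = P·i(n−1) + Q·i(n−2) for all n ≥ 3. Then for every n ≥ 1, i(n) = ((18λ + 2Q)·λ^{n−1} − (18μ + 2Q)·μ^{n−1})/σ. (This is the Binet-type expansion of the expected Merrifield–Simmons index of the random hexagonal cactus obtained from the principal part of its generating function at the dominant singularity.) -/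
/-!
Both `n ↦ i (n + 1)` and `n ↦ (A λⁿ - B μⁿ) / σ` solve the linear recurrence
`u (n + 2) = P u (n + 1) + Q u n`, the latter because `λ` and `μ` are the roots of its
characteristic polynomial `X² - P X - Q`; a solution is determined by its first two
values, and these agree. The only input from the cactus model is that the discriminant
`P² + 4Q = (3a + 7b + 5c)² + 130a + 26b + 78c + 25` is positive, so that `σ ≠ 0`.
-/

namespace LinearRecurrence

variable {R : Type*} [CommRing R]

/-- The recurrence `u (n + 2) = P * u (n + 1) + Q * u n` (coefficients listed from `u n` up). -/
def secondOrder (P Q : R) : LinearRecurrence R := ⟨2, ![Q, P]⟩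

variable {P Q : R}

theorem isSolution_secondOrder_iff {u : ℕ → R} :
    (secondOrder P Q).IsSolution u ↔ ∀ n, u (n + 2) = P * u (n + 1) + Q * u n := by
  change (∀ n, u (n + 2) = ∑ i : Fin 2, ![Q, P] i * u (n + i)) ↔ _
  simp only [Fin.sum_univ_two, Matrix.cons_val_zero, Matrix.cons_val_one,
    Fin.val_zero, Fin.val_one, add_zero, add_comm (Q * _)]

theorem secondOrder_eq_of_eq_init {u v : ℕ → R} (hu : (secondOrder P Q).IsSolution u)
    (hv : (secondOrder P Q).IsSolution v) (h0 : u 0 = v 0) (h1 : u 1 = v 1) : u = v := by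
  refine ((secondOrder P Q).eq_iff_eqOn_range_order u v hu hv).mpr fun n hn => ?_
  have hn : n < 2 := Finset.mem_range.mp hn
  interval_cases n <;> assumption

theorem isSolution_secondOrder_binet {lam mu : R} (hlam : lam ^ 2 = P * lam + Q)
    (hmu : mu ^ 2 = P * mu + Q) (α β : R) :
    (secondOrder P Q).IsSolution fun n => α * lam ^ n + β * mu ^ n :=
  isSolution_secondOrder_iff.mpr fun n => by
    linear_combination (α * lam ^ n) * hlam + (β * mu ^ n) * hmu

end LinearRecurrence

theorem half_add_sq_eq_of_sq_eq_discrim {K : Type*} [Field K] [NeZero (2 : K)] {P Q s : K}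
    (hs : s ^ 2 = P ^ 2 + 4 * Q) : ((P + s) / 2) ^ 2 = P * ((P + s) / 2) + Q := by
  field_simp
  linear_combination hs

theorem hexagonalCactus_discrim_pos {a b c : ℝ} (ha : 0 ≤ a) (hb : 0 ≤ b) (hc : 0 ≤ c) :
    0 < (5 + 3 * a + 7 * b + 5 * c) ^ 2 + 4 * (25 * a - 11 * b + 7 * c) := by
  have h : (5 + 3 * a + 7 * b + 5 * c) ^ 2 + 4 * (25 * a - 11 * b + 7 * c) =
      (3 * a + 7 * b + 5 * c) ^ 2 + 130 * a + 26 * b + 78 * c + 25 := by ring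
  rw [h]
  positivity

theorem merrifield_simmons_binet_general (a b c : ℝ) (ha : 0 ≤ a) (hb : 0 ≤ b) (hc : 0 ≤ c)
    (P Q σ lam mu : ℝ)
    (hP : P = 5 + 3 * a + 7 * b + 5 * c)
    (hQ : Q = 25 * a - 11 * b + 7 * c)
    (hσ : σ = Real.sqrt (P ^ 2 + 4 * Q))
    (hlam : lam = (P + σ) / 2)
    (hmu : mu = (P - σ) / 2)
    (i : ℕ → ℝ)
    (hi1 : i 1 = 18) (hi2 : i 2 = 18 * P + 2 * Q)
    (hi : ∀ n, 3 ≤ n → i n = P * i (n - 1) + Q * i (n - 2)) :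
    ∀ n, 1 ≤ n →
      i n = ((18 * lam + 2 * Q) * lam ^ (n - 1) - (18 * mu + 2 * Q) * mu ^ (n - 1)) / σ := by
  have hdisc : 0 < P ^ 2 + 4 * Q := hP ▸ hQ ▸ hexagonalCactus_discrim_pos ha hb hc
  have hσ0 : σ ≠ 0 := hσ ▸ (Real.sqrt_pos.mpr hdisc).ne'
  have hσsq : σ ^ 2 = P ^ 2 + 4 * Q := hσ ▸ Real.sq_sqrt hdisc.le
  have hlam_root : lam ^ 2 = P * lam + Q := hlam ▸ half_add_sq_eq_of_sq_eq_discrim hσsq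
  have hmu_root : mu ^ 2 = P * mu + Q := by
    rw [hmu, sub_eq_add_neg]
    exact half_add_sq_eq_of_sq_eq_discrim (by rw [neg_sq, hσsq])
  have hshift : (fun n => i (n + 1)) = fun n =>
      (18 * lam + 2 * Q) / σ * lam ^ n + -(18 * mu + 2 * Q) / σ * mu ^ n := by
    refine LinearRecurrence.secondOrder_eq_of_eq_init (P := P) (Q := Q) ?_
      (LinearRecurrence.isSolution_secondOrder_binet hlam_root hmu_root _ _) ?_ ?_
    · exact LinearRecurrence.isSolution_secondOrder_iff.mpr fun n => hi (n + 3) (by omega)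
    · field_simp
      rw [hi1, hlam, hmu]
      ring
    · field_simp
      rw [hi2, hlam, hmu]
      ring
  intro n hn
  obtain ⟨m, rfl⟩ := Nat.exists_eq_add_of_le' hn
  rw [congrFun hshift m, Nat.add_sub_cancel]
  ring

/-- Binet-type expansion of the expected Merrifield–Simmons index of the random
hexagonal cactus. -/
theorem merrifield_simmons_binet (a b c : ℝ) (ha : 0 ≤ a) (hb : 0 ≤ b) (hc : 0 ≤ c)
    (habc : a + b + c = 1)
    (P Q σ lam mu : ℝ)
    (hP : P = 5 + 3 * a + 7 * b + 5 * c)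
    (hQ : Q = 25 * a - 11 * b + 7 * c)
    (hσ : σ = Real.sqrt (P ^ 2 + 4 * Q))
    (hlam : lam = (P + σ) / 2)
    (hmu : mu = (P - σ) / 2)
    (i : ℕ → ℝ)
    (hi1 : i 1 = 18) (hi2 : i 2 = 18 * P + 2 * Q)
    (hi : ∀ n, 3 ≤ n → i n = P * i (n - 1) + Q * i (n - 2)) :
    ∀ n, 1 ≤ n →
      i n = ((18 * lam + 2 * Q) * lam ^ (n - 1) - (18 * mu + 2 * Q) * mu ^ (n - 1)) / σ :=
  merrifield_simmons_binet_general a b c ha hb hc P Q σ lam mu hP hQ hσ hlam hmu i hi1 hi2 hi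
end
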